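/- arXiv:2005.04123 — 6 statements merged into one kernel-verified Lean document; each statement's English description precedes it below -/
import Mathlib

section
/- Every minimal-size CNF formula equivalent to a CNF formula A is a subset of the resolution closure of A, where size is the total number of literal occurrences. -/
abbrev Lit : Type := ℕ × Bool
abbrev Clause : Type := Finset Lit
abbrev Cnf : Type := Finset Clause

def Lit.negate (l : Lit) : Lit := (l.1, !l.2)

def litSat (M : ℕ → Bool) (l : Lit) : Prop := M l.1 = l.2

def clauseSat (M : ℕ → Bool) (c : Clause) : Prop := ∃ l ∈ c, litSat M l

def cnfSat (M : ℕ → Bool) (F : Cnf) : Prop := ∀ c ∈ F, clauseSat M c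

def ClTaut (c : Clause) : Prop := ∃ v : ℕ, (v, true) ∈ c ∧ (v, false) ∈ c

def cnfVars (F : Cnf) : Set ℕ := {v | ∃ c ∈ F, ∃ b, (v, b) ∈ c}

def isResolvent (c1 c2 r : Clause) (v : ℕ) : Prop :=
  (v, true) ∈ c1 ∧ (v, false) ∈ c2 ∧
    r = c1.erase (v, true) ∪ c2.erase (v, false)

inductive Deriv (F : Set Clause) : Clause → Prop
  | base {c : Clause} : c ∈ F → Deriv F c
  | step {c1 c2 r : Clause} {v : ℕ} : Deriv F c1 → Deriv F c2 →
      isResolvent c1 c2 r v → ¬ ClTaut r → Deriv F r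

def ResCn (F : Set Clause) : Set Clause := {c | Deriv F c}

def setSat (M : ℕ → Bool) (S : Set Clause) : Prop := ∀ c ∈ S, clauseSat M c

def setEntails (S : Set Clause) (c : Clause) : Prop :=
  ∀ M, setSat M S → clauseSat M c

def superRedundant (F : Cnf) (c : Clause) : Prop :=
  setEntails (ResCn ↑F \ {c}) c

def cnfSize (F : Cnf) : ℕ := ∑ c ∈ F, c.card

def cnfEquiv (F G : Cnf) : Prop := ∀ M, cnfSat M F ↔ cnfSat M G

/-!
If `c ∈ B`, then `A` entails `c`, so by the subsumption theorem some clause `c' ⊆ c` is derivable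
from `A` by resolution. Replacing `c` by `c'` in `B` gives a formula equivalent to `A`, strictly
smaller unless `c' = c`; minimality of `B` forces `c = c' ∈ ResCn A`.

The subsumption theorem is proved by Davis–Putnam elimination of the variables of `A` that do not
occur in `c`: resolving out a variable keeps every consequence that does not mention it, and once
only variables of `c` remain, the assignment falsifying `c` falsifies some clause of the formula,
which is then necessarily a subclause of `c`.
-/

lemma litSat_update_of_ne {M : ℕ → Bool} {v : ℕ} {b : Bool} {l : Lit} (h : l.1 ≠ v) :
    litSat (Function.update M v b) l ↔ litSat M l := by
  simp only [litSat, Function.update_of_ne h]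

lemma eq_of_not_litSat {M : ℕ → Bool} {l l' : Lit} (h : l.1 = l'.1) (hl : ¬ litSat M l)
    (hl' : ¬ litSat M l') : l = l' := by
  obtain ⟨w, b⟩ := l
  obtain ⟨w', b'⟩ := l'
  simp only [litSat] at h hl hl'
  subst h
  cases b <;> cases b' <;> simp_all

lemma fst_ne_of_mem {d : Clause} {l : Lit} {v : ℕ} {b : Bool} (hl : l ∈ d) (hlb : l ≠ (v, b))
    (hnb : (v, !b) ∉ d) : l.1 ≠ v := by
  obtain ⟨w, b'⟩ := l
  rintro rfl
  cases b <;> cases b' <;> simp_all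

lemma not_clTaut_of_subset {c c' : Clause} (h : c' ⊆ c) (hc : ¬ ClTaut c) : ¬ ClTaut c' :=
  fun ⟨v, ht, hf⟩ => hc ⟨v, h ht, h hf⟩

lemma not_clTaut_of_not_clauseSat {M : ℕ → Bool} {c : Clause} (h : ¬ clauseSat M c) :
    ¬ ClTaut c := by
  rintro ⟨v, ht, hf⟩
  cases hv : M v
  · exact h ⟨(v, false), hf, hv⟩
  · exact h ⟨(v, true), ht, hv⟩

lemma clauseSat_of_isResolvent {c₁ c₂ r : Clause} {v : ℕ} (hr : isResolvent c₁ c₂ r v)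
    {M : ℕ → Bool} (h₁ : clauseSat M c₁) (h₂ : clauseSat M c₂) : clauseSat M r := by
  obtain ⟨-, -, rfl⟩ := hr
  cases hv : M v
  · obtain ⟨l, hl, hsat⟩ := h₁
    refine ⟨l, Finset.mem_union_left _ (Finset.mem_erase.2 ⟨?_, hl⟩), hsat⟩
    rintro rfl
    simp_all [litSat]
  · obtain ⟨l, hl, hsat⟩ := h₂
    refine ⟨l, Finset.mem_union_right _ (Finset.mem_erase.2 ⟨?_, hl⟩), hsat⟩
    rintro rfl
    simp_all [litSat]

lemma Deriv.sound {F : Set Clause} {c : Clause} (h : Deriv F c) {M : ℕ → Bool}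
    (hM : setSat M F) : clauseSat M c := by
  induction h with
  | base h => exact hM _ h
  | step _ _ hr _ ih₁ ih₂ => exact clauseSat_of_isResolvent hr ih₁ ih₂

lemma resCn_subset_of_subset_resCn {F G : Set Clause} (h : G ⊆ ResCn F) :
    ResCn G ⊆ ResCn F := by
  intro c hc
  induction hc with
  | base hc => exact h hc
  | step _ _ hr ht ih₁ ih₂ => exact Deriv.step ih₁ ih₂ hr ht

def clauseVars (c : Clause) : Set ℕ := Prod.fst '' (c : Set Lit)

def VarsIn (F : Set Clause) (S : Set ℕ) : Prop := ∀ d ∈ F, ∀ l ∈ d, l.1 ∈ S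

lemma clauseSat_update_of_notMem {M : ℕ → Bool} {c : Clause} {v : ℕ} (hv : v ∉ clauseVars c)
    (b : Bool) : clauseSat (Function.update M v b) c ↔ clauseSat M c := by
  refine exists_congr fun l => and_congr_right fun hl => litSat_update_of_ne ?_
  rintro rfl
  exact hv ⟨l, hl, rfl⟩

def falsifier (c : Clause) : ℕ → Bool := fun w => decide ((w, false) ∈ c)

lemma not_clauseSat_falsifier {c : Clause} (hc : ¬ ClTaut c) :
    ¬ clauseSat (falsifier c) c := by
  rintro ⟨⟨w, b⟩, hl, hsat⟩
  cases b <;> simp only [litSat, falsifier, decide_eq_true_eq, decide_eq_false_iff_not] at hsat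
  · exact hsat hl
  · exact hc ⟨w, hl, hsat⟩

lemma exists_subset_of_setEntails_of_varsIn {F : Set Clause} {c : Clause} (hc : ¬ ClTaut c)
    (hF : VarsIn F (clauseVars c)) (hent : setEntails F c) : ∃ d ∈ F, d ⊆ c := by
  have hnot : ¬ setSat (falsifier c) F := fun h => not_clauseSat_falsifier hc (hent _ h)
  simp only [setSat, not_forall] at hnot
  obtain ⟨d, hd, hdsat⟩ := hnot
  refine ⟨d, hd, fun l hl => ?_⟩
  obtain ⟨l', hl', hfst⟩ := hF d hd l hl
  have : l' = l := eq_of_not_litSat hfst (fun h => not_clauseSat_falsifier hc ⟨l', hl', h⟩)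
    (fun h => hdsat ⟨l, hl, h⟩)
  exact this ▸ hl'

/-- Davis–Putnam elimination of the variable `v`. Clauses containing both `v` and `¬v` are valid
and are dropped, so that no clause of the result mentions `v`. -/
def dpElim (F : Set Clause) (v : ℕ) : Set Clause :=
  {d | d ∈ F ∧ (v, true) ∉ d ∧ (v, false) ∉ d} ∪
  {r | ∃ c₁ ∈ F, ∃ c₂ ∈ F, (v, false) ∉ c₁ ∧ (v, true) ∉ c₂ ∧
    isResolvent c₁ c₂ r v ∧ ¬ ClTaut r}

section dpElim

variable {F : Set Clause} {v : ℕ}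

lemma dpElim_subset_resCn : dpElim F v ⊆ ResCn F := by
  rintro d (⟨hd, -⟩ | ⟨c₁, h₁, c₂, h₂, -, -, hr, ht⟩)
  · exact Deriv.base hd
  · exact Deriv.step (Deriv.base h₁) (Deriv.base h₂) hr ht

lemma VarsIn.dpElim {S : Set ℕ} (hF : VarsIn F (insert v S)) : VarsIn (dpElim F v) S := by
  have key : ∀ d ∈ F, ∀ l ∈ d, l.1 ≠ v → l.1 ∈ S := fun d hd l hl hne =>
    (hF d hd l hl).resolve_left hne
  rintro d (⟨hd, ht, hf⟩ | ⟨c₁, h₁, c₂, h₂, hf₁, ht₂, ⟨-, -, rfl⟩, -⟩) l hl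
  · exact key d hd l hl (fst_ne_of_mem hl (fun h => ht (h ▸ hl)) hf)
  · rcases Finset.mem_union.1 hl with hl | hl <;> obtain ⟨hne, hl⟩ := Finset.mem_erase.1 hl
    · exact key c₁ h₁ l hl (fst_ne_of_mem hl hne hf₁)
    · exact key c₂ h₂ l hl (fst_ne_of_mem hl hne ht₂)

variable {M : ℕ → Bool}

lemma not_litSat_of_not_clauseSat_update {d : Clause} {b : Bool}
    (h : ¬ clauseSat (Function.update M v b) d) {l : Lit} (hl : l ∈ d) (hne : l.1 ≠ v) :
    ¬ litSat M l :=
  fun hsat => h ⟨l, hl, (litSat_update_of_ne hne).2 hsat⟩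

lemma notMem_of_not_clauseSat_update {d : Clause} {b : Bool}
    (h : ¬ clauseSat (Function.update M v b) d) : (v, b) ∉ d :=
  fun hl => h ⟨(v, b), hl, by simp [litSat]⟩

/-- A clause of `F` falsified by `M[v ↦ b]` contains `v` with the opposite sign, since otherwise it
would be kept in `dpElim F v` and falsified by `M`. -/
lemma mem_of_not_clauseSat_update (hM : setSat M (dpElim F v)) {d : Clause} (hd : d ∈ F)
    {b : Bool} (h : ¬ clauseSat (Function.update M v b) d) : (v, !b) ∈ d := by
  by_contra hnb
  have hb := notMem_of_not_clauseSat_update h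
  have hdF : d ∈ dpElim F v := Or.inl ⟨hd, by cases b <;> simp_all⟩
  obtain ⟨l, hl, hsat⟩ := hM d hdF
  refine not_litSat_of_not_clauseSat_update h hl (fst_ne_of_mem hl ?_ hnb) hsat
  rintro rfl
  exact hb hl

lemma exists_setSat_update_of_setSat_dpElim (hM : setSat M (dpElim F v)) :
    ∃ b, setSat (Function.update M v b) F := by
  by_contra! h
  simp only [setSat, not_forall] at h
  obtain ⟨d₁, h₁F, h₁⟩ := h false
  obtain ⟨d₂, h₂F, h₂⟩ := h true
  set r := d₁.erase (v, true) ∪ d₂.erase (v, false)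
  have hr : ¬ clauseSat M r := by
    rintro ⟨l, hl, hsat⟩
    rcases Finset.mem_union.1 hl with hl | hl <;> obtain ⟨hne, hl⟩ := Finset.mem_erase.1 hl
    · exact not_litSat_of_not_clauseSat_update h₁ hl
        (fst_ne_of_mem hl hne (notMem_of_not_clauseSat_update h₁)) hsat
    · exact not_litSat_of_not_clauseSat_update h₂ hl
        (fst_ne_of_mem hl hne (notMem_of_not_clauseSat_update h₂)) hsat
  have hrF : r ∈ dpElim F v :=
    Or.inr ⟨d₁, h₁F, d₂, h₂F, notMem_of_not_clauseSat_update h₁,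
      notMem_of_not_clauseSat_update h₂,
      ⟨mem_of_not_clauseSat_update hM h₁F h₁, mem_of_not_clauseSat_update hM h₂F h₂, rfl⟩,
      not_clTaut_of_not_clauseSat hr⟩
  exact hr (hM r hrF)

lemma setEntails_dpElim {c : Clause} (hv : v ∉ clauseVars c) (hent : setEntails F c) :
    setEntails (dpElim F v) c := fun M hM => by
  obtain ⟨b, hb⟩ := exists_setSat_update_of_setSat_dpElim hM
  exact (clauseSat_update_of_notMem hv b).1 (hent _ hb)

end dpElim

/-- The subsumption theorem of resolution, for clause sets over finitely many variables. -/
theorem exists_resCn_subset_of_setEntails {F : Set Clause} {c : Clause} {S : Set ℕ}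
    (hS : S.Finite) (hF : VarsIn F (S ∪ clauseVars c)) (hc : ¬ ClTaut c)
    (hent : setEntails F c) : ∃ c' ∈ ResCn F, c' ⊆ c := by
  induction S, hS using Set.Finite.induction_on generalizing F with
  | empty =>
    rw [Set.empty_union] at hF
    obtain ⟨d, hd, hdc⟩ := exists_subset_of_setEntails_of_varsIn hc hF hent
    exact ⟨d, Deriv.base hd, hdc⟩
  | @insert v S _ _ ih =>
    rw [Set.insert_union] at hF
    by_cases hv : v ∈ clauseVars c
    · exact ih (by rwa [Set.insert_eq_of_mem (Set.mem_union_right _ hv)] at hF) hent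
    · obtain ⟨c', hc', hsub⟩ := ih hF.dpElim (setEntails_dpElim hv hent)
      exact ⟨c', resCn_subset_of_subset_resCn dpElim_subset_resCn hc', hsub⟩

lemma cnfVars_finite (A : Cnf) : (cnfVars A).Finite := by
  refine (A.finite_toSet.biUnion fun c _ => c.finite_toSet.image Prod.fst).subset ?_
  rintro v ⟨c, hc, b, hb⟩
  exact Set.mem_biUnion hc ⟨(v, b), hb, rfl⟩

lemma varsIn_cnfVars (A : Cnf) : VarsIn ↑A (cnfVars A) :=
  fun c hc l hl => ⟨c, hc, l.2, hl⟩

section replace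

variable {B : Cnf} {c c' : Clause}

lemma cnfSat_insert_erase_iff {M : ℕ → Bool} (hc : c ∈ B) (hsub : c' ⊆ c)
    (hent : cnfSat M B → clauseSat M c') : cnfSat M (insert c' (B.erase c)) ↔ cnfSat M B := by
  constructor
  · intro hM d hd
    by_cases hdc : d = c
    · subst hdc
      obtain ⟨l, hl, hsat⟩ := hM c' (Finset.mem_insert_self _ _)
      exact ⟨l, hsub hl, hsat⟩
    · exact hM d (Finset.mem_insert_of_mem (Finset.mem_erase.2 ⟨hdc, hd⟩))
  · intro hM d hd
    rcases Finset.mem_insert.1 hd with rfl | hd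
    · exact hent hM
    · exact hM d (Finset.mem_of_mem_erase hd)

lemma cnfSize_insert_erase_lt (hc : c ∈ B) (hss : c' ⊂ c) :
    cnfSize (insert c' (B.erase c)) < cnfSize B := by
  have hle : cnfSize (insert c' (B.erase c)) ≤ c'.card + cnfSize (B.erase c) := by
    by_cases hmem : c' ∈ B.erase c
    · rw [Finset.insert_eq_self.2 hmem]
      exact Nat.le_add_left _ _
    · exact (Finset.sum_insert hmem).le
  have hB : cnfSize B = c.card + cnfSize (B.erase c) := (Finset.add_sum_erase _ _ hc).symm
  have := Finset.card_lt_card hss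
  omega

end replace

theorem stmt1_general (A B : Cnf)
    (hB : ∀ c ∈ B, ¬ ClTaut c)
    (hequiv : cnfEquiv B A)
    (hmin : ∀ B' : Cnf, (∀ c ∈ B', ¬ ClTaut c) → cnfEquiv B' A →
      cnfSize B ≤ cnfSize B') :
    (↑B : Set Clause) ⊆ ResCn ↑A := by
  intro c (hc : c ∈ B)
  obtain ⟨c', hc', hsub⟩ := exists_resCn_subset_of_setEntails (cnfVars_finite A)
    (fun d hd l hl => Or.inl (varsIn_cnfVars A d hd l hl)) (hB c hc)
    (fun M hM => (hequiv M).2 hM c hc)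
  obtain rfl | hss := hsub.eq_or_ssubset
  · exact hc'
  have hequiv' : cnfEquiv (insert c' (B.erase c)) A := fun M =>
    (cnfSat_insert_erase_iff hc hsub fun hM => Deriv.sound hc' ((hequiv M).1 hM)).trans
      (hequiv M)
  have hnt : ∀ d ∈ insert c' (B.erase c), ¬ ClTaut d := by
    intro d hd
    rcases Finset.mem_insert.1 hd with rfl | hd
    · exact not_clTaut_of_subset hsub (hB c hc)
    · exact hB d (Finset.mem_of_mem_erase hd)
  exact absurd (hmin _ hnt hequiv') (cnfSize_insert_erase_lt hc hss).not_ge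

/-- Every minimal-size CNF formula equivalent to `A` is a subset of the
resolution closure of `A`. -/
theorem stmt1 (A B : Cnf)
    (hA : ∀ c ∈ A, ¬ ClTaut c) (hB : ∀ c ∈ B, ¬ ClTaut c)
    (hequiv : cnfEquiv B A)
    (hmin : ∀ B' : Cnf, (∀ c ∈ B', ¬ ClTaut c) → cnfEquiv B' A →
      cnfSize B ≤ cnfSize B') :
    (↑B : Set Clause) ⊆ ResCn ↑A :=
  stmt1_general A B hB hequiv hmin
end

section
/- A CNF formula B over variables Y expresses forgetting all variables but Y from A if and only if for every formula D over variables Y, the conjunction A ∧ D is satisfiable exactly when B ∧ D is satisfiable. -/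
inductive PropForm : Type
  | tru : PropForm
  | fls : PropForm
  | var : ℕ → PropForm
  | neg : PropForm → PropForm
  | conj : PropForm → PropForm → PropForm
  | disj : PropForm → PropForm → PropForm

def PropForm.eval (M : ℕ → Bool) : PropForm → Bool
  | .tru => true
  | .fls => false
  | .var n => M n
  | .neg φ => !(PropForm.eval M φ)
  | .conj φ ψ => PropForm.eval M φ && PropForm.eval M ψ
  | .disj φ ψ => PropForm.eval M φ || PropForm.eval M ψ

def PropForm.vars : PropForm → Set ℕ
  | .tru => ∅
  | .fls => ∅
  | .var n => {n}
  | .neg φ => PropForm.vars φ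
  | .conj φ ψ => PropForm.vars φ ∪ PropForm.vars ψ
  | .disj φ ψ => PropForm.vars φ ∪ PropForm.vars ψ

def entailsForm (A : Cnf) (φ : PropForm) : Prop :=
  ∀ M, cnfSat M A → PropForm.eval M φ = true

/-- `B` expresses forgetting all variables but `Y` from `A`. -/
def ForgetExpr (A : Cnf) (Y : Set ℕ) (B : Cnf) : Prop :=
  cnfVars B ⊆ Y ∧
    ∀ φ : PropForm, PropForm.vars φ ⊆ Y → (entailsForm A φ ↔ entailsForm B φ)

def litSetSat (M : ℕ → Bool) (S : Set Lit) : Prop := ∀ l ∈ S, litSat M l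

theorem entailsForm_iff_not_exists_neg (A : Cnf) (φ : PropForm) :
    entailsForm A φ ↔ ¬ ∃ M, cnfSat M A ∧ (PropForm.neg φ).eval M = true := by
  simp [entailsForm, PropForm.eval]

theorem entailsForm_neg_iff (A : Cnf) (φ : PropForm) :
    entailsForm A (.neg φ) ↔ ¬ ∃ M, cnfSat M A ∧ φ.eval M = true := by
  simp [entailsForm, PropForm.eval]

/-- `B` (over variables `Y`) expresses forgetting all variables but `Y` from
`A` iff for every formula `D` over `Y`, `A ∧ D` is satisfiable exactly when
`B ∧ D` is satisfiable. -/
theorem stmt2 (A B : Cnf) (Y : Set ℕ) (hB : cnfVars B ⊆ Y) :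
    ForgetExpr A Y B ↔
      ∀ D : PropForm, PropForm.vars D ⊆ Y →
        ((∃ M, cnfSat M A ∧ PropForm.eval M D = true) ↔
         (∃ M, cnfSat M B ∧ PropForm.eval M D = true)) := by
  constructor
  · rintro ⟨-, hforget⟩ D hD
    have hneg := hforget (.neg D) hD
    rwa [entailsForm_neg_iff, entailsForm_neg_iff, not_iff_not] at hneg
  · intro hsat
    refine ⟨hB, fun φ hφ => ?_⟩
    rw [entailsForm_iff_not_exists_neg, entailsForm_iff_not_exists_neg]
    exact not_congr (hsat (.neg φ) hφ)
end

section
/- If S is a set of literals such that S ∪ A is satisfiable but (S \ {l}) ∪ {¬l} ∪ A is unsatisfiable, then the CNF formula A contains a clause containing the literal l. -/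
/- Flipping the variable of `l` in a model `M` of `S ∪ A` yields a model of `(S \ {l}) ∪ {¬l}`:
the other literals of `S` live on other variables, since `M` satisfies both them and `l`. The
flipped model must then falsify some clause of `A` that `M` satisfies, and the only literal whose
truth value changed is `l`. -/

theorem litSat_update_of_fst_ne {M : ℕ → Bool} {v : ℕ} {b : Bool} {m : Lit} (h : m.1 ≠ v) :
    litSat (Function.update M v b) m ↔ litSat M m := by
  simp only [litSat, Function.update_of_ne h]

theorem litSat_update_negate (M : ℕ → Bool) (l : Lit) :
    litSat (Function.update M l.1 (!l.2)) l.negate := by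
  simp [litSat, Lit.negate]

theorem Lit.eq_of_litSat_of_fst_eq {M : ℕ → Bool} {m l : Lit} (hm : litSat M m) (hl : litSat M l)
    (h : m.1 = l.1) : m = l :=
  Prod.ext h (by rw [← hm, ← hl, h])

theorem litSetSat_update_negate {M : ℕ → Bool} {S : Set Lit} {l : Lit} (hS : litSetSat M S)
    (hl : l ∈ S) : litSetSat (Function.update M l.1 (!l.2)) ((S \ {l}) ∪ {l.negate}) := by
  rintro m (⟨hmS, hml⟩ | rfl)
  · have hvar : m.1 ≠ l.1 := fun h => hml (Lit.eq_of_litSat_of_fst_eq (hS m hmS) (hS l hl) h)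
    exact (litSat_update_of_fst_ne hvar).2 (hS m hmS)
  · exact litSat_update_negate M l

theorem mem_of_clauseSat_of_not_clauseSat_update {M : ℕ → Bool} {c : Clause} {v : ℕ} {b : Bool}
    (h : clauseSat M c) (h' : ¬ clauseSat (Function.update M v b) c) : (v, M v) ∈ c := by
  obtain ⟨m, hmc, hm⟩ := h
  by_cases hvar : m.1 = v
  · have : m = (v, M v) := Prod.ext hvar (by rw [← hm, hvar])
    exact this ▸ hmc
  · exact absurd ⟨m, hmc, (litSat_update_of_fst_ne hvar).2 hm⟩ h'

/-- If `S ∪ A` is satisfiable but `(S \ {l}) ∪ {¬l} ∪ A` is not, then `A`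
contains a clause containing the literal `l`. -/
theorem stmt8 (A : Cnf) (S : Set Lit) (l : Lit) (hl : l ∈ S)
    (hsat : ∃ M, litSetSat M S ∧ cnfSat M A)
    (hunsat : ¬ ∃ M, litSetSat M ((S \ {l}) ∪ {Lit.negate l}) ∧ cnfSat M A) :
    ∃ c ∈ A, l ∈ c := by
  obtain ⟨M, hS, hA⟩ := hsat
  have hflip := litSetSat_update_negate hS hl
  obtain ⟨c, hc, hfalse⟩ : ∃ c ∈ A, ¬ clauseSat (Function.update M l.1 (!l.2)) c := by
    by_contra! hall
    exact hunsat ⟨_, hflip, hall⟩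
  have hmem := mem_of_clauseSat_of_not_clauseSat_update (hA c hc) hfalse
  rw [show M l.1 = l.2 from hS l hl] at hmem
  exact ⟨c, hc, hmem⟩
end

section
/- A clause c of a CNF formula F is superredundant if and only if there exists a formula G with F ⊢ G (every clause of G derivable from F by resolution), G ⊨ c, and c ∉ G. -/
theorem setEntails.mono {S T : Set Clause} {c : Clause} (hST : S ⊆ T)
    (hS : setEntails S c) : setEntails T c :=
  fun M hM => hS M fun d hd => hM d (hST hd)

theorem stmt13_general (F : Cnf) (c : Clause) :
    superRedundant F c ↔
      ∃ G : Set Clause, (∀ d ∈ G, Deriv ↑F d) ∧ setEntails G c ∧ c ∉ G := by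
  constructor
  · intro h
    exact ⟨ResCn ↑F \ {c}, fun d hd => hd.1, h, fun h' => h'.2 rfl⟩
  · rintro ⟨G, hG, hE, hcG⟩
    exact hE.mono fun d hd => ⟨hG d hd, fun hdc => hcG (hdc ▸ hd)⟩

/-- A clause `c` of `F` is superredundant iff some set of clauses `G` is
derivable from `F` by resolution, entails `c`, and does not contain `c`. -/
theorem stmt13 (F : Cnf) (c : Clause) (hc : c ∈ F)
    (hNT : ∀ d ∈ F, ¬ ClTaut d) :
    superRedundant F c ↔
      ∃ G : Set Clause, (∀ d ∈ G, Deriv ↑F d) ∧ setEntails G c ∧ c ∉ G :=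
  stmt13_general F c
end

section
/- If no two clauses of a CNF formula F resolve (no pair of clauses of F produces a non-tautological resolvent), then a clause of F is superredundant if and only if F contains a clause that is a strict subset of it. -/
lemma Lit.negate_negate (l : Lit) : l.negate.negate = l := by
  simp [Lit.negate]

lemma Lit.negate_ne_self (l : Lit) : l.negate ≠ l := by
  simp [Lit.negate, Prod.ext_iff]

lemma Lit.negate_inj {l l' : Lit} : l.negate = l'.negate ↔ l = l' := by
  constructor
  · intro h; simpa only [Lit.negate_negate] using congrArg Lit.negate h
  · rintro rfl; rfl

lemma litSat_negate {M : ℕ → Bool} {l : Lit} : litSat M l.negate ↔ ¬ litSat M l := by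
  rcases l with ⟨v, b⟩
  cases M v <;> cases b <;> simp [litSat, Lit.negate]

lemma clTaut_iff_exists_negate_mem {c : Clause} : ClTaut c ↔ ∃ l ∈ c, l.negate ∈ c := by
  constructor
  · rintro ⟨v, ht, hf⟩
    exact ⟨(v, true), ht, hf⟩
  · rintro ⟨⟨v, b⟩, hl, hn⟩
    cases b
    · exact ⟨v, hn, hl⟩
    · exact ⟨v, hl, hn⟩

lemma not_clTaut_insert_negate {c : Clause} {l : Lit} (hc : ¬ ClTaut c) (hl : l ∉ c) :
    ¬ ClTaut (insert l.negate c) := by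
  simp only [clTaut_iff_exists_negate_mem, Finset.mem_insert, not_exists, not_and] at hc ⊢
  rintro l' (rfl | hl') hn
  · rw [Lit.negate_negate] at hn
    exact hn.elim (Lit.negate_ne_self l).symm hl
  · rcases hn with hn | hn
    · exact hl (Lit.negate_inj.mp hn ▸ hl')
    · exact hc l' hl' hn

lemma clauseSat.mono {M : ℕ → Bool} {c d : Clause} (h : clauseSat M c) (hcd : c ⊆ d) :
    clauseSat M d := by
  obtain ⟨l, hl, hM⟩ := h
  exact ⟨l, hcd hl, hM⟩

lemma clauseSat_of_negate_mem {M : ℕ → Bool} {c d : Clause} (hc : ¬ clauseSat M c) {l : Lit}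
    (hl : l ∈ d) (hn : l.negate ∈ c) : clauseSat M d :=
  ⟨l, hl, by simpa [litSat_negate] using fun h => hc ⟨l.negate, hn, h⟩⟩

lemma exists_not_clauseSat {c : Clause} (hc : ¬ ClTaut c) : ∃ M, ¬ clauseSat M c := by
  refine ⟨fun v => decide ((v, false) ∈ c), ?_⟩
  rintro ⟨⟨v, b⟩, hl, hM⟩
  cases b <;> simp_all [litSat, ClTaut]

def NoUniqueClash (c₁ c₂ : Clause) : Prop :=
  ∀ l ∈ c₁, l.negate ∈ c₂ → ∃ l' ∈ c₁, l'.1 ≠ l.1 ∧ l'.negate ∈ c₂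

lemma exists_other_clash_of_clTaut_resolvent {c₁ c₂ r : Clause} {v : ℕ}
    (h₁ : ¬ ClTaut c₁) (h₂ : ¬ ClTaut c₂) (hr : isResolvent c₁ c₂ r v) (ht : ClTaut r) :
    ∃ l' ∈ c₁, l'.1 ≠ v ∧ l'.negate ∈ c₂ := by
  obtain ⟨-, hv₂, rfl⟩ := hr
  obtain ⟨w, hwt, hwf⟩ := ht
  simp only [Finset.mem_union, Finset.mem_erase, ne_eq, Prod.mk.injEq, and_true] at hwt hwf
  rcases hwt with ⟨hwv, hwt⟩ | ⟨-, hwt⟩ <;> rcases hwf with ⟨-, hwf⟩ | ⟨-, hwf⟩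
  · exact (h₁ ⟨w, hwt, hwf⟩).elim
  · exact ⟨(w, true), hwt, hwv, hwf⟩
  · refine ⟨(w, false), hwf, ?_, hwt⟩
    rintro rfl
    exact h₂ ⟨w, hwt, hv₂⟩
  · exact (h₂ ⟨w, hwt, hwf⟩).elim

lemma noUniqueClash_of_clTaut_resolvents {c₁ c₂ : Clause} (h₁ : ¬ ClTaut c₁) (h₂ : ¬ ClTaut c₂)
    (h₁₂ : ∀ r v, isResolvent c₁ c₂ r v → ClTaut r)
    (h₂₁ : ∀ r v, isResolvent c₂ c₁ r v → ClTaut r) :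
    NoUniqueClash c₁ c₂ := by
  rintro ⟨v, b⟩ hl hn
  cases b
  · have hr : isResolvent c₂ c₁ _ v := ⟨hn, hl, rfl⟩
    obtain ⟨l', hl', hv, hn'⟩ := exists_other_clash_of_clTaut_resolvent h₂ h₁ hr (h₂₁ _ _ hr)
    exact ⟨l'.negate, hn', hv, by rwa [Lit.negate_negate]⟩
  · have hr : isResolvent c₁ c₂ _ v := ⟨hl, hn, rfl⟩
    exact exists_other_clash_of_clTaut_resolvent h₁ h₂ hr (h₁₂ _ _ hr)

theorem exists_model_of_noUniqueClash (S : Finset Clause)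
    (hS : ∀ d₁ ∈ S, ∀ d₂ ∈ S, NoUniqueClash d₁ d₂) (c : Clause) (hc : ¬ ClTaut c)
    (hS_c : ∀ d ∈ S, ¬ d ⊆ c) :
    ∃ M, ¬ clauseSat M c ∧ ∀ d ∈ S, clauseSat M d := by
  induction S using Finset.strongInduction generalizing c with
  | H S ih =>
  by_cases hneg : ∃ d ∈ S, ∃ l ∈ d, l.negate ∈ c
  · obtain ⟨d, hd, l, hl, hn⟩ := hneg
    obtain ⟨M, hMc, hMS⟩ := ih (S.erase d) (Finset.erase_ssubset hd)
      (fun d₁ h₁ d₂ h₂ => hS d₁ (Finset.mem_of_mem_erase h₁) d₂ (Finset.mem_of_mem_erase h₂))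
      c hc (fun e he => hS_c e (Finset.mem_of_mem_erase he))
    refine ⟨M, hMc, fun e he => ?_⟩
    rcases eq_or_ne e d with rfl | hed
    · exact clauseSat_of_negate_mem hMc hl hn
    · exact hMS e (Finset.mem_erase.mpr ⟨hed, he⟩)
  push Not at hneg
  rcases S.eq_empty_or_nonempty with rfl | ⟨d₀, hd₀⟩
  · obtain ⟨M, hM⟩ := exists_not_clauseSat hc
    exact ⟨M, hM, by simp⟩
  obtain ⟨l, hl, hlc⟩ := Finset.not_subset.mp (hS_c d₀ hd₀)
  set T := S.filter (l ∉ ·)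
  have hT_S : T ⊆ S := Finset.filter_subset _ _
  have hT_c : ∀ d ∈ T, ¬ d ⊆ insert l.negate c := by
    intro d hd hdc
    obtain ⟨hdS, hld⟩ := Finset.mem_filter.mp hd
    by_cases hnd : l.negate ∈ d
    · obtain ⟨l', hl', hv, hn'⟩ := hS d₀ hd₀ d hdS l hl hnd
      have hn'c : l'.negate ∈ c := by
        rcases Finset.mem_insert.mp (hdc hn') with h | h
        · exact (hv (congrArg Prod.fst (Lit.negate_inj.mp h))).elim
        · exact h
      exact hneg d₀ hd₀ l' hl' hn'c
    · exact hS_c d hdS ((Finset.subset_insert_iff_of_notMem hnd).mp hdc)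
  obtain ⟨M, hMc, hMT⟩ := ih T (Finset.filter_ssubset.mpr ⟨d₀, hd₀, not_not.mpr hl⟩)
    (fun d₁ h₁ d₂ h₂ => hS d₁ (hT_S h₁) d₂ (hT_S h₂)) (insert l.negate c)
    (not_clTaut_insert_negate hc hlc) hT_c
  refine ⟨M, fun h => hMc (h.mono (Finset.subset_insert _ _)), fun d hd => ?_⟩
  by_cases hld : l ∈ d
  · exact clauseSat_of_negate_mem hMc hld (by simp)
  · exact hMT d (Finset.mem_filter.mpr ⟨hd, hld⟩)

lemma resCn_eq_self {F : Set Clause}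
    (hF : ∀ c₁ ∈ F, ∀ c₂ ∈ F, ∀ r v, isResolvent c₁ c₂ r v → ClTaut r) : ResCn F = F := by
  ext d
  refine ⟨fun h => ?_, Deriv.base⟩
  induction h with
  | base h => exact h
  | step _ _ hr hn ih₁ ih₂ => exact (hn (hF _ ih₁ _ ih₂ _ _ hr)).elim

/-- If no two clauses of `F` resolve (all resolvents are tautological), then a
clause of `F` is superredundant iff `F` contains a strict subset of it. -/
theorem stmt15 (F : Cnf) (hNT : ∀ d ∈ F, ¬ ClTaut d)
    (hnores : ∀ c1 ∈ F, ∀ c2 ∈ F, ∀ (r : Clause) (v : ℕ),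
      isResolvent c1 c2 r v → ClTaut r)
    (c : Clause) (hc : c ∈ F) :
    superRedundant F c ↔ ∃ c' ∈ F, c' ⊂ c := by
  constructor
  · intro hsr
    by_contra! hno
    have hclash : ∀ d₁ ∈ F.erase c, ∀ d₂ ∈ F.erase c, NoUniqueClash d₁ d₂ := by
      intro d₁ h₁ d₂ h₂
      have h₁ := Finset.mem_of_mem_erase h₁
      have h₂ := Finset.mem_of_mem_erase h₂
      exact noUniqueClash_of_clTaut_resolvents (hNT d₁ h₁) (hNT d₂ h₂)
        (hnores d₁ h₁ d₂ h₂) (hnores d₂ h₂ d₁ h₁)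
    have hsub : ∀ d ∈ F.erase c, ¬ d ⊆ c := fun d hd hdc =>
      hno d (Finset.mem_of_mem_erase hd) (hdc.ssubset_of_ne (Finset.ne_of_mem_erase hd))
    obtain ⟨M, hMc, hMF⟩ := exists_model_of_noUniqueClash (F.erase c) hclash c (hNT c hc) hsub
    refine hMc (hsr M ?_)
    rw [resCn_eq_self hnores]
    rintro d ⟨hdF, hdc⟩
    exact hMF d (Finset.mem_erase.mpr ⟨hdc, hdF⟩)
  · rintro ⟨c', hc'F, hc'c⟩ M hM
    exact (hM c' ⟨Deriv.base hc'F, hc'c.ne⟩).mono hc'c.subset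
end

section
/- If F' is a satisfiable CNF formula sharing no variables with F, then a clause c of F is superredundant in F if and only if it is superredundant in F ∪ F'. -/
/-! Resolution is sound and never mixes clauses over disjoint variable sets, so every clause of
`ResCn (F ∪ F')` is derivable from `F` alone or from `F'` alone. Adding `F'` can therefore only
enlarge the resolution closure, which gives one direction. Conversely, a model `M` of
`ResCn F \ {c}` falsifying `c` can be overwritten on the variables of `F'` by a model of `F'`;
the patched assignment satisfies `ResCn (F ∪ F') \ {c}` and still falsifies `c`. -/

theorem clauseSat_congr {M N : ℕ → Bool} {c : Clause} (h : ∀ l ∈ c, M l.1 = N l.1) :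
    clauseSat M c ↔ clauseSat N c := by
  simp only [clauseSat, litSat]
  exact exists_congr fun l => and_congr_right fun hl => by rw [h l hl]

theorem clauseSat_of_isResolvent_s19 {c1 c2 r : Clause} {v : ℕ} {M : ℕ → Bool}
    (hres : isResolvent c1 c2 r v) (h1 : clauseSat M c1) (h2 : clauseSat M c2) :
    clauseSat M r := by
  obtain ⟨-, -, rfl⟩ := hres
  by_cases hMv : M v = true
  · obtain ⟨l, hl, hls⟩ := h2
    refine ⟨l, Finset.mem_union_right _ (Finset.mem_erase.mpr ⟨?_, hl⟩), hls⟩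
    rintro rfl
    simp [litSat, hMv] at hls
  · obtain ⟨l, hl, hls⟩ := h1
    refine ⟨l, Finset.mem_union_left _ (Finset.mem_erase.mpr ⟨?_, hl⟩), hls⟩
    rintro rfl
    simp [litSat, hMv] at hls

namespace Deriv

theorem sound_s19 {S : Set Clause} {M : ℕ → Bool} (hS : setSat M S) {d : Clause} (hd : Deriv S d) :
    clauseSat M d := by
  induction hd with
  | base hc => exact hS _ hc
  | step _ _ hres _ ih1 ih2 => exact clauseSat_of_isResolvent_s19 hres ih1 ih2

theorem mono {S T : Set Clause} (hST : S ⊆ T) {d : Clause} (hd : Deriv S d) : Deriv T d := by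
  induction hd with
  | base hc => exact base (hST hc)
  | step _ _ hres hnt ih1 ih2 => exact step ih1 ih2 hres hnt

theorem mem_cnfVars {G : Cnf} {d : Clause} (hd : Deriv ↑G d) : ∀ l ∈ d, l.1 ∈ cnfVars G := by
  induction hd with
  | base hc => exact fun l hl => ⟨_, hc, l.2, hl⟩
  | step _ _ hres _ ih1 ih2 =>
    obtain ⟨-, -, rfl⟩ := hres
    intro l hl
    rcases Finset.mem_union.mp hl with h | h
    · exact ih1 l (Finset.mem_of_mem_erase h)
    · exact ih2 l (Finset.mem_of_mem_erase h)

theorem of_union {F F' : Cnf} (hdisj : Disjoint (cnfVars F) (cnfVars F')) {d : Clause}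
    (hd : Deriv ↑(F ∪ F') d) : Deriv ↑F d ∨ Deriv ↑F' d := by
  induction hd with
  | base hc =>
    rcases Finset.mem_union.mp hc with h | h
    · exact .inl (base h)
    · exact .inr (base h)
  | @step _ _ _ v _ _ hres hnt ih1 ih2 =>
    have hv1 := hres.1
    have hv2 := hres.2.1
    rcases ih1 with hd1 | hd1 <;> rcases ih2 with hd2 | hd2
    · exact .inl (step hd1 hd2 hres hnt)
    · exact (hdisj.notMem_of_mem_left (hd1.mem_cnfVars _ hv1) (hd2.mem_cnfVars (v, false) hv2)).elim
    · exact (hdisj.notMem_of_mem_left (hd2.mem_cnfVars _ hv2) (hd1.mem_cnfVars (v, true) hv1)).elim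
    · exact .inr (step hd1 hd2 hres hnt)

end Deriv

theorem superRedundant.mono {F G : Cnf} {c : Clause} (hFG : F ⊆ G) (h : superRedundant F c) :
    superRedundant G c :=
  fun M hM => h M fun d hd => hM d ⟨hd.1.mono (Finset.coe_subset.mpr hFG), hd.2⟩

open Classical in
theorem superRedundant_of_union {F F' : Cnf} {c : Clause} (hc : c ∈ F)
    (hdisj : Disjoint (cnfVars F) (cnfVars F')) (hsat : ∃ M, cnfSat M F')
    (h : superRedundant (F ∪ F') c) : superRedundant F c := by
  intro M hM
  obtain ⟨M', hM'⟩ := hsat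
  let N := (cnfVars F').piecewise M' M
  have hN_F : ∀ {d : Clause}, Deriv ↑F d → ∀ l ∈ d, N l.1 = M l.1 := fun hd l hl =>
    Set.piecewise_eq_of_notMem _ _ _ (hdisj.notMem_of_mem_left (hd.mem_cnfVars l hl))
  have hN_F' : ∀ {d : Clause}, Deriv ↑F' d → ∀ l ∈ d, N l.1 = M' l.1 := fun hd l hl =>
    Set.piecewise_eq_of_mem _ _ _ (hd.mem_cnfVars l hl)
  have hN : setSat N (ResCn ↑(F ∪ F') \ {c}) := by
    rintro d ⟨hd, hdc⟩
    rcases Deriv.of_union hdisj hd with hd | hd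
    · exact (clauseSat_congr (hN_F hd)).mpr (hM d ⟨hd, hdc⟩)
    · exact (clauseSat_congr (hN_F' hd)).mpr (hd.sound_s19 hM')
  exact (clauseSat_congr (hN_F (.base hc))).mp (h N hN)

theorem stmt19_general (F F' : Cnf) (c : Clause) (hc : c ∈ F)
    (hdisj : Disjoint (cnfVars F) (cnfVars F'))
    (hsat : ∃ M, cnfSat M F') :
    (superRedundant F c ↔ superRedundant (F ∪ F') c) :=
  ⟨superRedundant.mono Finset.subset_union_left, superRedundant_of_union hc hdisj hsat⟩

/-- If `F'` is satisfiable and shares no variables with `F`, a clause `c` of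
`F` is superredundant in `F` iff it is superredundant in `F ∪ F'`. -/
theorem stmt19 (F F' : Cnf) (c : Clause) (hc : c ∈ F)
    (hNT : ∀ d ∈ F, ¬ ClTaut d) (hNT' : ∀ d ∈ F', ¬ ClTaut d)
    (hdisj : Disjoint (cnfVars F) (cnfVars F'))
    (hsat : ∃ M, cnfSat M F') :
    (superRedundant F c ↔ superRedundant (F ∪ F') c) :=
  stmt19_general F F' c hc hdisj hsat
end
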